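/- Let n be a positive integer and σ_0 > 0. Define a set function f : 2^{[n]} → ℝ as follows: for S ⊆ [n], let f(S) = E[max_{i∈[n]} X_i], where the X_i are independent, X_i is Gaussian with mean 0 and variance σ_0² for i ∈ S, and X_i = 0 almost surely for i ∉ S (with f(∅) = 0). Then f is submodular: for all S, T ⊆ [n], f(S ∪ T) + f(S ∩ T) ≤ f(S) + f(T). -/

import Mathlib

/-!
Realise all the laws `gaussianOnSet n σ₀ S` on one probability space: if `X` has i.i.d.
`N(0, σ₀²)` coordinates, then `gaussianOnSet n σ₀ S` is the law of `X` with the coordinates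
outside `S` set to zero. The claim then follows by integrating the pointwise submodularity of
`S ↦ max_i (1_S X)_i`: away from the trivial case `S = [n]` or `T = [n]`, the maxima over `S` and
`T` are nonnegative, the maximum over `S ∪ T` is at most their maximum and the maximum over
`S ∩ T` at most their minimum.
-/

open MeasureTheory ProbabilityTheory

/-- For `S ⊆ [n]`, `gaussianOnSet n σ₀ S` is the joint law of independent random variables
`X i` with `X i ~ N(0, σ₀²)` for `i ∈ S` and `X i = 0` almost surely for `i ∉ S`. -/
noncomputable def gaussianOnSet (n : ℕ) (σ₀ : ℝ) (S : Finset (Fin n)) :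
    Measure (Fin n → ℝ) :=
  Measure.pi fun i =>
    if i ∈ S then gaussianReal 0 (Real.toNNReal (σ₀ ^ 2)) else Measure.dirac 0

section IndicatorMax

variable {ι : Type*}

theorem Real.norm_iSup_le_sum_norm [Fintype ι] (y : ι → ℝ) : ‖⨆ i, y i‖ ≤ ∑ i, ‖y i‖ := by
  have single_le (i : ι) : ‖y i‖ ≤ ∑ j, ‖y j‖ :=
    Finset.single_le_sum (f := fun j => ‖y j‖) (fun j _ => norm_nonneg _) (Finset.mem_univ i)
  have sum_nonneg : 0 ≤ ∑ i, ‖y i‖ := Finset.sum_nonneg fun i _ => norm_nonneg _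
  rw [Real.norm_eq_abs, abs_le]
  constructor
  · rcases isEmpty_or_nonempty ι with hι | ⟨⟨i⟩⟩
    · simp [Real.iSup_of_isEmpty]
    · exact (neg_le_neg (single_le i)).trans ((neg_abs_le (y i)).trans (Finite.le_ciSup y i))
  · exact Real.iSup_le (fun i => (le_abs_self _).trans (single_le i)) sum_nonneg

theorem iSup_indicator_union_add_iSup_indicator_inter_le [Finite ι] (x : ι → ℝ) (s t : Set ι) :
    (⨆ i, (s ∪ t).indicator x i) + ⨆ i, (s ∩ t).indicator x i ≤
      (⨆ i, s.indicator x i) + ⨆ i, t.indicator x i := by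
  by_cases hs : s = Set.univ
  · simp [hs]
  by_cases ht : t = Set.univ
  · simp [ht, add_comm]
  set M : Set ι → ℝ := fun u => ⨆ i, u.indicator x i
  have le_M {u : Set ι} {i : ι} (hi : i ∈ u) : x i ≤ M u := by
    simpa [hi] using Finite.le_ciSup (u.indicator x) i
  have M_nonneg {u : Set ι} (hu : u ≠ Set.univ) : 0 ≤ M u := by
    obtain ⟨i, hi⟩ := (Set.ne_univ_iff_exists_notMem u).mp hu
    simpa [hi] using Finite.le_ciSup (u.indicator x) i
  have union_le : M (s ∪ t) ≤ max (M s) (M t) := by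
    refine Real.iSup_le (fun i => ?_) (le_max_of_le_left (M_nonneg hs))
    by_cases his : i ∈ s
    · simpa [his] using le_max_of_le_left (le_M his)
    by_cases hit : i ∈ t
    · simpa [hit] using le_max_of_le_right (le_M hit)
    simpa [his, hit] using le_max_of_le_left (M_nonneg hs)
  have inter_le : M (s ∩ t) ≤ min (M s) (M t) := by
    refine Real.iSup_le (fun i => ?_) (le_min (M_nonneg hs) (M_nonneg ht))
    by_cases hi : i ∈ s ∩ t
    · simpa [hi] using le_min (le_M hi.1) (le_M hi.2)
    · simpa [hi] using le_min (M_nonneg hs) (M_nonneg ht)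
  have := max_add_min (M s) (M t)
  change M (s ∪ t) + M (s ∩ t) ≤ M s + M t
  linarith

theorem measurable_indicator_apply (s : Set ι) (i : ι) :
    Measurable fun x : ι → ℝ => s.indicator x i := by
  by_cases hi : i ∈ s <;> simp only [hi, not_false_eq_true, Set.indicator_of_mem,
    Set.indicator_of_notMem] <;> fun_prop

theorem Measure.pi_ite_dirac_zero_eq_map_indicator [Fintype ι] [DecidableEq ι] (ν : Measure ℝ)
    [IsProbabilityMeasure ν] (S : Finset ι) :
    Measure.pi (fun i => if i ∈ S then ν else Measure.dirac 0) =
      (Measure.pi fun _ => ν).map (S : Set ι).indicator := by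
  have indicator_eq : (S : Set ι).indicator =
      fun (x : ι → ℝ) i => (if i ∈ S then id else fun _ => 0) (x i) := by
    ext x i
    by_cases hi : i ∈ S <;> simp [hi]
  rw [indicator_eq, Measure.pi_map_pi fun i => by split_ifs <;> fun_prop]
  congr with i : 1
  split_ifs
  · exact Measure.map_id.symm
  · simp [Measure.map_const]

theorem integrable_iSup_indicator [Fintype ι] {μ : ι → Measure ℝ} [∀ i, IsFiniteMeasure (μ i)]
    (hμ : ∀ i, Integrable id (μ i)) (s : Set ι) :
    Integrable (fun x => ⨆ i, s.indicator x i) (Measure.pi μ) := by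
  refine (integrable_finsetSum Finset.univ fun i _ => (integrable_eval (hμ i)).norm).mono'
    (Measurable.iSup (measurable_indicator_apply s)).aestronglyMeasurable
    (ae_of_all _ fun x => ?_)
  exact (Real.norm_iSup_le_sum_norm _).trans
    (Finset.sum_le_sum fun i _ => norm_indicator_le_norm_self x i)

end IndicatorMax

theorem integral_iSup_gaussianOnSet (n : ℕ) (σ₀ : ℝ) (S : Finset (Fin n)) :
    ∫ x, (⨆ i, x i) ∂(gaussianOnSet n σ₀ S) =
      ∫ x, ⨆ i, (S : Set (Fin n)).indicator x i
        ∂(Measure.pi fun _ => gaussianReal 0 (Real.toNNReal (σ₀ ^ 2))) := by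
  rw [gaussianOnSet, Measure.pi_ite_dirac_zero_eq_map_indicator]
  refine integral_map ?_ (Measurable.iSup fun i => measurable_pi_apply i).aestronglyMeasurable
  exact (measurable_pi_lambda _ (measurable_indicator_apply _)).aemeasurable

theorem expected_max_submodular
    (n : ℕ) (σ₀ : ℝ)
    (f : Finset (Fin n) → ℝ)
    (hf : ∀ S, f S = ∫ x, (⨆ i, x i) ∂(gaussianOnSet n σ₀ S)) :
    ∀ S T : Finset (Fin n), f (S ∪ T) + f (S ∩ T) ≤ f S + f T := by
  intro S T
  set μ := Measure.pi fun _ : Fin n => gaussianReal 0 (Real.toNNReal (σ₀ ^ 2))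
  have hint (U : Finset (Fin n)) : Integrable (fun x => ⨆ i, (U : Set (Fin n)).indicator x i) μ :=
    integrable_iSup_indicator (fun _ => (memLp_id_gaussianReal 1).integrable le_rfl) _
  simp only [hf, integral_iSup_gaussianOnSet]
  rw [← integral_add (hint _) (hint _), ← integral_add (hint _) (hint _)]
  refine integral_mono ((hint _).add (hint _)) ((hint _).add (hint _)) fun x => ?_
  simpa only [Finset.coe_union, Finset.coe_inter] using
    iSup_indicator_union_add_iSup_indicator_inter_le x (S : Set (Fin n)) T
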